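/- arXiv:2006.14664 — 3 statements merged into one kernel-verified Lean document; each statement's English description precedes it below -/
import Mathlib

section
/- Let i ≥ 1 and let R = ℤ[X₀,…,Xᵢ] be the multivariate polynomial ring in i+1 variables (indexed by Fin (i+1)). For a subset S of the index set, write ℓ_S = Σ_{j∈S} X_j. In the formal power series ring R⟦t⟧, set F = ∏_{S : (i+1−|S|) even} (1 + ℓ_S·t) and G = ∏_{S : (i+1−|S|) odd} (1 + ℓ_S·t), where the products run over all subsets S of Fin (i+1) (including the empty set, with ℓ_∅ = 0). Then F ≡ G mod t^{i+1}; that is, the coefficients of t^k in F and G agree for every k with 0 ≤ k ≤ i. (Equivalently, since G has constant coefficient 1 and is hence a unit, the coefficient of t^k in F·G⁻¹ vanishes for all 1 ≤ k ≤ i.) -/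
/-!
Compare logarithmic derivatives. Writing `ℓ_S = ∑_{j ∈ S} x_j` and `n = |ι|`,
`(F'G - FG')/(FG) = ∑_S (-1)^{|Sᶜ|} ℓ_S / (1 + ℓ_S t)`, whose coefficient of `t^m` is
`(-1)^m ∑_S (-1)^{|Sᶜ|} ℓ_S^{m+1}`. Expanding `ℓ_S^{m+1}` into monomials, a monomial in the
variables `T` occurs for every `S ⊇ T` and so gets the coefficient `∑_{S ⊇ T} (-1)^{|Sᶜ|}`, which
vanishes as soon as `T ≠ ι`, in particular when `m + 1 < n`. So the Wronskian `F'G - FG'` is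
divisible by `t^{n-1}`; since `F(0) = G(0) = 1` and division by integers is harmless in a
torsion-free ring, `F ≡ G mod t^n`.
-/

open Finset PowerSeries

section AlternatingSum

variable {ι R : Type*} [Fintype ι] [DecidableEq ι] [CommRing R]

theorem sum_filter_supset_neg_one_pow_card_compl {T : Finset ι} (hT : T ≠ univ) :
    ∑ S with T ⊆ S, (-1 : R) ^ #Sᶜ = 0 := by
  have hTc : Tᶜ.Nonempty := by rwa [nonempty_iff_ne_empty, Ne, compl_eq_empty_iff]
  calc ∑ S with T ⊆ S, (-1 : R) ^ #Sᶜ = ∑ U ∈ Tᶜ.powerset, (-1 : R) ^ #U :=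
        sum_nbij' compl compl (by simp) (by simp [subset_compl_comm]) (by simp) (by simp)
          (by simp)
    _ = ((∑ U ∈ Tᶜ.powerset, (-1 : ℤ) ^ #U : ℤ) : R) := by push_cast; rfl
    _ = 0 := by rw [sum_powerset_neg_one_pow_card_of_nonempty hTc, Int.cast_zero]

theorem sum_neg_one_pow_card_compl_mul_sum_pow (x : ι → R) {m : ℕ}
    (hm : m < Fintype.card ι) :
    ∑ S : Finset ι, (-1 : R) ^ #Sᶜ * (∑ j ∈ S, x j) ^ m = 0 := by
  have expand (S : Finset ι) : (∑ j ∈ S, x j) ^ m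
      = ∑ p : Fin m → ι, if image p univ ⊆ S then ∏ k, x (p k) else 0 := by
    rw [sum_pow', ← sum_filter]
    congr 1
    ext p
    simp [Fintype.mem_piFinset, image_subset_iff]
  simp_rw [expand, mul_sum, mul_ite, mul_zero]
  rw [sum_comm]
  refine sum_eq_zero fun p _ => ?_
  have hp : image p univ ≠ univ := fun h => by
    have := (card_image_le (s := univ) (f := p)).trans_eq (card_fin m)
    rw [h, card_univ] at this
    omega
  rw [← sum_filter, ← sum_mul, sum_filter_supset_neg_one_pow_card_compl hp, zero_mul]

end AlternatingSum

theorem Finset.sum_neg_one_pow_mul_eq_sum_filter_even_sub_sum_filter_odd {α R : Type*}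
    [CommRing R] (s : Finset α) (e : α → ℕ) (f : α → R) :
    ∑ a ∈ s, (-1 : R) ^ e a * f a
      = ∑ a ∈ s with Even (e a), f a - ∑ a ∈ s with Odd (e a), f a := by
  rw [← sum_filter_add_sum_filter_not s (fun a => Even (e a))]
  simp only [Nat.not_even_iff_odd]
  rw [sub_eq_add_neg, ← sum_neg_distrib]
  congr 1 <;> refine sum_congr rfl fun a ha => ?_ <;> rw [mem_filter] at ha
  · rw [ha.2.neg_one_pow, one_mul]
  · rw [ha.2.neg_one_pow, neg_one_mul]

namespace PowerSeries

variable {R : Type*} [CommRing R]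

noncomputable def geom (a : R) : R⟦X⟧ := mk fun n => (-a) ^ n

theorem one_add_C_mul_X_mul_geom (a : R) : (1 + C a * X) * geom a = 1 := by
  ext (_ | n)
  · simp [geom]
  · rw [add_mul, one_mul, mul_assoc, map_add, coeff_C_mul, coeff_succ_X_mul]
    simp only [geom, coeff_mk, coeff_one, Nat.succ_ne_zero, if_false]
    ring

theorem coeff_C_mul_geom (a : R) (n : ℕ) : coeff n (C a * geom a) = (-1) ^ n * a ^ (n + 1) := by
  rw [coeff_C_mul, geom, coeff_mk, neg_pow]
  ring

theorem constantCoeff_prod_one_add_C_mul_X {κ : Type*} (s : Finset κ) (c : κ → R) :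
    constantCoeff (∏ k ∈ s, (1 + C (c k) * X)) = 1 := by
  simp [map_prod]

theorem derivative_prod_one_add_C_mul_X {κ : Type*} (s : Finset κ) (c : κ → R) :
    d⁄dX R (∏ k ∈ s, (1 + C (c k) * X))
      = (∏ k ∈ s, (1 + C (c k) * X)) * ∑ k ∈ s, C (c k) * geom (c k) := by
  classical
  induction s using Finset.cons_induction with
  | empty => simp
  | cons a s ha ih =>
    have hda : d⁄dX R (1 + C (c a) * X) = C (c a) := by simp
    rw [prod_cons, sum_cons, Derivation.leibniz, ih, hda, smul_eq_mul, smul_eq_mul]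
    linear_combination (-(∏ k ∈ s, (1 + C (c k) * X)) * C (c a)) * one_add_C_mul_X_mul_geom (c a)

variable [IsAddTorsionFree R]

theorem X_pow_succ_dvd_sub_C_of_X_pow_dvd_derivative {H : R⟦X⟧} {n : ℕ}
    (h : X ^ n ∣ d⁄dX R H) : X ^ (n + 1) ∣ H - C (constantCoeff H) := by
  rw [X_pow_dvd_iff] at h ⊢
  rintro (_ | k) hk
  · simp
  · have hk' := h k (by omega)
    rw [coeff_derivative, ← Nat.cast_succ, mul_comm, ← nsmul_eq_mul,
      smul_eq_zero_iff_right (Nat.succ_ne_zero k)] at hk'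
    simp [hk']

theorem X_pow_succ_dvd_sub_of_X_pow_dvd_wronskian {F G : R⟦X⟧} {n : ℕ} (hG : IsUnit G)
    (h0 : constantCoeff F = constantCoeff G)
    (h : X ^ n ∣ d⁄dX R F * G - F * d⁄dX R G) : X ^ (n + 1) ∣ F - G := by
  obtain ⟨H, rfl⟩ : G ∣ F := hG.dvd
  have hW : d⁄dX R (G * H) * G - G * H * d⁄dX R G = G ^ 2 * d⁄dX R H := by
    rw [Derivation.leibniz, smul_eq_mul, smul_eq_mul]; ring
  rw [hW, (hG.pow 2).dvd_mul_left] at h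
  have hH0 : constantCoeff H = 1 := by
    rw [map_mul] at h0
    exact (isUnit_iff_constantCoeff.mp hG).mul_eq_left.mp h0
  have := X_pow_succ_dvd_sub_C_of_X_pow_dvd_derivative h
  rw [hH0, map_one] at this
  calc X ^ (n + 1) ∣ G * (H - 1) := dvd_mul_of_dvd_right this G
    _ = G * H - G := by ring

theorem X_pow_card_dvd_prod_filter_even_sub_prod_filter_odd {ι : Type*} [Fintype ι]
    [DecidableEq ι] [Nonempty ι] (x : ι → R) :
    X ^ Fintype.card ι ∣ ∏ S : Finset ι with Even #Sᶜ, (1 + C (∑ j ∈ S, x j) * X)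
      - ∏ S : Finset ι with Odd #Sᶜ, (1 + C (∑ j ∈ S, x j) * X) := by
  obtain ⟨n, hn⟩ := Nat.exists_eq_succ_of_ne_zero (Fintype.card_ne_zero (α := ι))
  set F := ∏ S : Finset ι with Even #Sᶜ, (1 + C (∑ j ∈ S, x j) * X)
  set G := ∏ S : Finset ι with Odd #Sᶜ, (1 + C (∑ j ∈ S, x j) * X)
  have hlog : X ^ n ∣ ∑ S : Finset ι with Even #Sᶜ, C (∑ j ∈ S, x j) * geom (∑ j ∈ S, x j)
      - ∑ S : Finset ι with Odd #Sᶜ, C (∑ j ∈ S, x j) * geom (∑ j ∈ S, x j) := by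
    refine X_pow_dvd_iff.mpr fun m hm => ?_
    rw [map_sub, map_sum, map_sum]
    simp only [coeff_C_mul_geom, ← mul_sum]
    rw [← mul_sub, ← sum_neg_one_pow_mul_eq_sum_filter_even_sub_sum_filter_odd,
      sum_neg_one_pow_card_compl_mul_sum_pow x (by omega), mul_zero]
  have hF0 : constantCoeff F = 1 := constantCoeff_prod_one_add_C_mul_X _ _
  have hG0 : constantCoeff G = 1 := constantCoeff_prod_one_add_C_mul_X _ _
  rw [hn]
  refine X_pow_succ_dvd_sub_of_X_pow_dvd_wronskian
    (isUnit_iff_constantCoeff.mpr (hG0 ▸ isUnit_one)) (hF0.trans hG0.symm) ?_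
  rw [derivative_prod_one_add_C_mul_X, derivative_prod_one_add_C_mul_X]
  convert dvd_mul_of_dvd_right hlog (F * G) using 1
  ring

end PowerSeries

theorem stmt0_general (i : ℕ)
    (F G : PowerSeries (MvPolynomial (Fin (i + 1)) ℤ))
    (hF : F = ∏ S ∈ Finset.univ.filter
        (fun S : Finset (Fin (i + 1)) => Even (i + 1 - S.card)),
      (1 + PowerSeries.C (R := MvPolynomial (Fin (i + 1)) ℤ) (∑ j ∈ S, MvPolynomial.X j) *
        PowerSeries.X))
    (hG : G = ∏ S ∈ Finset.univ.filter
        (fun S : Finset (Fin (i + 1)) => Odd (i + 1 - S.card)),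
      (1 + PowerSeries.C (R := MvPolynomial (Fin (i + 1)) ℤ) (∑ j ∈ S, MvPolynomial.X j) *
        PowerSeries.X)) :
    ∀ k ≤ i, PowerSeries.coeff (R := MvPolynomial (Fin (i + 1)) ℤ) k F =
      PowerSeries.coeff (R := MvPolynomial (Fin (i + 1)) ℤ) k G := by
  intro k hk
  have h := X_pow_card_dvd_prod_filter_even_sub_prod_filter_odd
    (MvPolynomial.X : Fin (i + 1) → MvPolynomial (Fin (i + 1)) ℤ)
  simp only [card_compl, Fintype.card_fin] at h
  rw [← hF, ← hG] at h
  exact sub_eq_zero.mp (by simpa using X_pow_dvd_iff.mp h k (by omega))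

/-- **Lemma (vanishing), splitting-principle form.**
For `i ≥ 1`, with one variable `X j` for each `j : Fin (i+1)` (the first Chern classes of
the invertible sheaves `L₁, …, L_{i+1}`), set `ℓ_S = ∑_{j ∈ S} X j` for each subset `S`.
Let `F` be the product of `1 + ℓ_S·t` over subsets `S` with `i + 1 - |S|` even, and `G` the
analogous product over subsets with `i + 1 - |S|` odd.  Then the coefficients of `t^k` in
`F` and `G` agree for all `0 ≤ k ≤ i`. -/
theorem stmt0 (i : ℕ) (hi : 1 ≤ i)
    (F G : PowerSeries (MvPolynomial (Fin (i + 1)) ℤ))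
    (hF : F = ∏ S ∈ Finset.univ.filter
        (fun S : Finset (Fin (i + 1)) => Even (i + 1 - S.card)),
      (1 + PowerSeries.C (R := MvPolynomial (Fin (i + 1)) ℤ) (∑ j ∈ S, MvPolynomial.X j) *
        PowerSeries.X))
    (hG : G = ∏ S ∈ Finset.univ.filter
        (fun S : Finset (Fin (i + 1)) => Odd (i + 1 - S.card)),
      (1 + PowerSeries.C (R := MvPolynomial (Fin (i + 1)) ℤ) (∑ j ∈ S, MvPolynomial.X j) *
        PowerSeries.X)) :
    ∀ k ≤ i, PowerSeries.coeff (R := MvPolynomial (Fin (i + 1)) ℤ) k F =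
      PowerSeries.coeff (R := MvPolynomial (Fin (i + 1)) ℤ) k G :=
  stmt0_general i F G hF hG
end

section
/- Let R be a commutative ring, let x₁,…,x_n and y be elements of R, and let j ≥ 1. Then the j-th elementary symmetric polynomial of the shifted family satisfies e_j(x₁+y, x₂+y, …, x_n+y) = Σ_{i=0}^{j} C(n−i, j−i) · e_i(x₁,…,x_n) · y^{j−i}, where C(a,b) denotes the binomial coefficient (taken to be 0 when b > a) and e_i denotes the i-th elementary symmetric polynomial in n variables (with e₀ = 1). -/
/-!
Expand each product `∏_{a ∈ S} (x_a + y)` over the subsets `T ⊆ S`, group the terms by `i = #T`,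
and count: a given `i`-subset `T` lies in exactly `C(n - i, j - i)` of the `j`-subsets `S`.
-/

open Finset

namespace Finset

variable {ι M R : Type*}

theorem prod_add_const_eq_sum_powersetCard [CommSemiring R] (S : Finset ι) (x : ι → R) (y : R) :
    ∏ a ∈ S, (x a + y) =
      ∑ i ∈ range (#S + 1), ∑ T ∈ S.powersetCard i, (∏ a ∈ T, x a) * y ^ (#S - i) := by
  classical
  rw [prod_add, sum_powerset]
  refine sum_congr rfl fun i _ => sum_congr rfl fun T hT => ?_
  obtain ⟨hTS, rfl⟩ := mem_powersetCard.mp hT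
  rw [prod_const, card_sdiff_of_subset hTS]

theorem sum_powersetCard_sum_powersetCard [AddCommMonoid M] (s : Finset ι) {i j : ℕ} (hij : i ≤ j)
    (f : Finset ι → M) :
    ∑ S ∈ s.powersetCard j, ∑ T ∈ S.powersetCard i, f T =
      (#s - i).choose (j - i) • ∑ T ∈ s.powersetCard i, f T := by
  classical
  rw [sum_comm' (t' := s.powersetCard i) (s' := fun T => {S ∈ s.powersetCard j | T ⊆ S}), smul_sum]
  · refine sum_congr rfl fun T hT => ?_
    obtain ⟨hTs, rfl⟩ := mem_powersetCard.mp hT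
    rw [sum_const, card_filter_powersetCard_subset T s j hTs hij]
  · intro S T
    simp only [mem_powersetCard, mem_filter]
    grind

theorem sum_powersetCard_prod_add_const [CommSemiring R] (s : Finset ι) (x : ι → R) (y : R)
    (j : ℕ) :
    ∑ S ∈ s.powersetCard j, ∏ a ∈ S, (x a + y) =
      ∑ i ∈ range (j + 1),
        ((#s - i).choose (j - i) : R) * (∑ T ∈ s.powersetCard i, ∏ a ∈ T, x a) * y ^ (j - i) := by
  calc ∑ S ∈ s.powersetCard j, ∏ a ∈ S, (x a + y)
      = ∑ S ∈ s.powersetCard j, ∑ i ∈ range (j + 1),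
          ∑ T ∈ S.powersetCard i, (∏ a ∈ T, x a) * y ^ (j - i) :=
        sum_congr rfl fun S hS => by
          rw [prod_add_const_eq_sum_powersetCard, (mem_powersetCard.mp hS).2]
    _ = ∑ i ∈ range (j + 1), ∑ S ∈ s.powersetCard j,
          ∑ T ∈ S.powersetCard i, (∏ a ∈ T, x a) * y ^ (j - i) := sum_comm
    _ = _ := sum_congr rfl fun i hi => by
        rw [sum_powersetCard_sum_powersetCard s (Nat.lt_succ_iff.mp (mem_range.mp hi)),
          nsmul_eq_mul, ← sum_mul, mul_assoc]

end Finset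

theorem stmt3_general {R : Type*} [CommRing R] (n : ℕ) (x : Fin n → R) (y : R) (j : ℕ) :
    (∑ S ∈ Finset.powersetCard j (Finset.univ : Finset (Fin n)), ∏ a ∈ S, (x a + y)) =
      ∑ i ∈ Finset.range (j + 1),
        (Nat.choose (n - i) (j - i) : R) *
          (∑ S ∈ Finset.powersetCard i (Finset.univ : Finset (Fin n)), ∏ a ∈ S, x a) *
          y ^ (j - i) := by
  simpa using sum_powersetCard_prod_add_const univ x y j

/-- **Example (line), splitting-principle form** (c.f. Fulton, Example 3.2.2).
For elements `x₁,…,x_n` and `y` of a commutative ring `R` and `j ≥ 1`, the `j`-th elementary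
symmetric polynomial of the shifted family satisfies
`e_j(x₁+y,…,x_n+y) = ∑_{i=0}^{j} C(n-i, j-i) · e_i(x₁,…,x_n) · y^(j-i)`,
where `e_i` is realized as the sum over `i`-element subsets of products. -/
theorem stmt3 {R : Type*} [CommRing R] (n : ℕ) (x : Fin n → R) (y : R) (j : ℕ) (hj : 1 ≤ j) :
    (∑ S ∈ Finset.powersetCard j (Finset.univ : Finset (Fin n)), ∏ a ∈ S, (x a + y)) =
      ∑ i ∈ Finset.range (j + 1),
        (Nat.choose (n - i) (j - i) : R) *
          (∑ S ∈ Finset.powersetCard i (Finset.univ : Finset (Fin n)), ∏ a ∈ S, x a) *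
          y ^ (j - i) :=
  stmt3_general n x y j
end

section
/- Let R be a commutative ring, let i ≥ 1, let u ∈ R, and let f ∈ R⟦t⟧ be a formal power series with constant coefficient 1 whose coefficients of t^k vanish for all 1 ≤ k ≤ i−1. Write a_i for the coefficient of t^i in f. The power series τ = t·(1+u·t)⁻¹ has zero constant coefficient, so the substitution f(τ) is well-defined, and f is a unit in R⟦t⟧. Set g = f(τ)·f(t)⁻¹. Then: (a) the coefficient of t^k in g vanishes for all 1 ≤ k ≤ i, and (b) the coefficient of t^{i+1} in g equals −i·u·a_i (where i denotes the image of the integer i in R). -/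
/-!
Write `τ = X·w` with `w = (1 + u·X)⁻¹ = 1 - u·X + ⋯`. The coefficient of `X^n` in `f(τ) - f`
is `∑_{k<n} a_k·[X^{n-k}] w^k`. For `n ≤ i + 1` the gap in `f` kills every term except `k = 0`,
which vanishes as `n ≥ 1`, and `k = i`, which only occurs for `n = i + 1` and equals
`a_i·[X] w^i = -i·u·a_i`. Hence `f(τ) - f ≡ -i·u·a_i·X^{i+1} mod X^{i+2}`, and
`g = 1 + (f(τ) - f)·f⁻¹` with `f⁻¹ ≡ 1 mod X`.
-/

/-- Substitution of a power series `τ` with zero constant coefficient into a power series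
`f`: the coefficient of `t^m` in `f(τ)` is `∑_{k=0}^m (coeff k f) · (coeff m (τ^k))`
(the terms with `k > m` vanish when the constant coefficient of `τ` is zero). -/
noncomputable def PowerSeries.substAt {R : Type*} [CommRing R] (τ f : PowerSeries R) :
    PowerSeries R :=
  PowerSeries.mk fun m =>
    ∑ k ∈ Finset.range (m + 1),
      PowerSeries.coeff k f * PowerSeries.coeff m (τ ^ k)

namespace PowerSeries

variable {R : Type*} [CommRing R]

lemma constantCoeff_eq_one_of_mul_eq_one {φ ψ : PowerSeries R} (hφ : constantCoeff φ = 1)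
    (h : φ * ψ = 1) : constantCoeff ψ = 1 := by
  simpa [hφ] using congrArg constantCoeff h

lemma coeff_one_of_one_add_C_mul_X_mul_eq_one {u : R} {w : PowerSeries R}
    (hw : (1 + C u * X) * w = 1) : coeff 1 w = -u := by
  have hw0 : constantCoeff w = 1 := constantCoeff_eq_one_of_mul_eq_one (by simp) hw
  have h := congrArg (coeff 1) hw
  rw [coeff_one_mul, hw0] at h
  simp only [map_add, coeff_one, one_ne_zero, ↓reduceIte, coeff_succ_mul_X, coeff_zero_C,
    zero_add, mul_one, constantCoeff_one, map_mul, constantCoeff_C, constantCoeff_X, mul_zero,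
    add_zero] at h
  linear_combination h

lemma coeff_substAt_X_mul {w : PowerSeries R} (hw0 : constantCoeff w = 1) (f : PowerSeries R)
    (n : ℕ) :
    coeff n (substAt (X * w) f) =
      coeff n f + ∑ k ∈ Finset.range n, coeff k f * coeff (n - k) (w ^ k) := by
  simp only [substAt, coeff_mk, mul_pow, coeff_X_pow_mul']
  rw [Finset.sum_range_succ, add_comm, if_pos le_rfl, Nat.sub_self, coeff_zero_eq_constantCoeff,
    map_pow, hw0, one_pow, mul_one]
  congr 1
  exact Finset.sum_congr rfl fun k hk => by rw [if_pos (Finset.mem_range.1 hk).le]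

lemma coeff_mul_of_X_pow_dvd {n : ℕ} {φ : PowerSeries R} (hφ : X ^ n ∣ φ)
    (ψ : PowerSeries R) :
    coeff n (φ * ψ) = coeff n φ * constantCoeff ψ := by
  obtain ⟨χ, rfl⟩ := hφ
  rw [mul_assoc, coeff_X_pow_mul', coeff_X_pow_mul', if_pos le_rfl, if_pos le_rfl, Nat.sub_self,
    coeff_zero_eq_constantCoeff, map_mul]

section

variable {i : ℕ} {f w : PowerSeries R}

lemma coeff_mul_coeff_sub_pow_eq_zero_of_ne (hf : ∀ k, 1 ≤ k → k ≤ i - 1 → coeff k f = 0)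
    {k m : ℕ} (hkm : k < m) (hm : m ≤ i + 1) (hki : k ≠ i) :
    coeff k f * coeff (m - k) (w ^ k) = 0 := by
  rcases Nat.eq_zero_or_pos k with rfl | hk
  · rw [pow_zero, coeff_one, if_neg (by omega), mul_zero]
  · rw [hf k hk (by omega), zero_mul]

lemma X_pow_succ_dvd_substAt_X_mul_sub (hf : ∀ k, 1 ≤ k → k ≤ i - 1 → coeff k f = 0)
    (hw0 : constantCoeff w = 1) :
    X ^ (i + 1) ∣ substAt (X * w) f - f :=
  X_pow_dvd_iff.2 fun m hm => by
    rw [map_sub, coeff_substAt_X_mul hw0, add_sub_cancel_left]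
    exact Finset.sum_eq_zero fun k hk =>
      coeff_mul_coeff_sub_pow_eq_zero_of_ne hf (Finset.mem_range.1 hk) hm.le (by simp at hk; omega)

lemma coeff_succ_substAt_X_mul_sub (hf : ∀ k, 1 ≤ k → k ≤ i - 1 → coeff k f = 0)
    (hw0 : constantCoeff w = 1) :
    coeff (i + 1) (substAt (X * w) f - f) = coeff i f * (i * coeff 1 w) := by
  rw [map_sub, coeff_substAt_X_mul hw0, add_sub_cancel_left,
    Finset.sum_eq_single_of_mem i (Finset.self_mem_range_succ i)
      fun k hk hki => coeff_mul_coeff_sub_pow_eq_zero_of_ne hf (Finset.mem_range.1 hk) le_rfl hki,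
    Nat.add_sub_cancel_left, coeff_one_pow, hw0, one_pow, mul_one]

end

end PowerSeries

open PowerSeries in
theorem stmt6_general {R : Type*} [CommRing R] (i : ℕ) (u : R) (f : PowerSeries R)
    (hf0 : PowerSeries.constantCoeff f = 1)
    (hf : ∀ k, 1 ≤ k → k ≤ i - 1 → PowerSeries.coeff k f = 0) :
    IsUnit (1 + PowerSeries.C u * PowerSeries.X) ∧ IsUnit f ∧
    ∀ w : PowerSeries R, (1 + PowerSeries.C u * PowerSeries.X) * w = 1 →
      PowerSeries.constantCoeff (PowerSeries.X * w) = 0 ∧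
      ∀ h : PowerSeries R, f * h = 1 →
        (∀ k, 1 ≤ k → k ≤ i →
          PowerSeries.coeff k (PowerSeries.substAt (PowerSeries.X * w) f * h) = 0) ∧
        PowerSeries.coeff (i + 1) (PowerSeries.substAt (PowerSeries.X * w) f * h) =
          -(i : R) * u * PowerSeries.coeff i f := by
  refine ⟨isUnit_iff_constantCoeff.2 (by simp), isUnit_iff_constantCoeff.2 (by simp [hf0]),
    fun w hw => ⟨by simp, fun h hh => ?_⟩⟩
  have hw0 := constantCoeff_eq_one_of_mul_eq_one (by simp) hw
  have hdvd := X_pow_succ_dvd_substAt_X_mul_sub hf hw0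
  have hg : substAt (X * w) f * h = (substAt (X * w) f - f) * h + 1 := by
    rw [sub_mul, hh, sub_add_cancel]
  refine ⟨fun k hk hki => ?_, ?_⟩
  · rw [hg, map_add, X_pow_dvd_iff.1 (dvd_mul_of_dvd_left hdvd h) k (by omega), coeff_one,
      if_neg (by omega), add_zero]
  · rw [hg, map_add, coeff_mul_of_X_pow_dvd hdvd, coeff_succ_substAt_X_mul_sub hf hw0,
      coeff_one_of_one_add_C_mul_X_mul_eq_one hw, constantCoeff_eq_one_of_mul_eq_one hf0 hh,
      coeff_one, if_neg (by omega)]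
    ring

/-- **Core power-series computation for Lemmas (vanishing) and (factor).**
Let `f ∈ R⟦t⟧` have constant coefficient `1` and vanishing coefficients of `t^k` for
`1 ≤ k ≤ i-1`, and let `a_i` be its coefficient of `t^i`.  Then `1 + u·t` and `f` are units;
for any inverse `w` of `1 + u·t` the series `τ = t·w = t·(1+u·t)⁻¹` has zero constant
coefficient (so `f(τ)` makes sense), and for any inverse `h` of `f`, the series
`g = f(τ)·f⁻¹` has vanishing coefficients of `t^k` for `1 ≤ k ≤ i`, and its coefficient of
`t^{i+1}` equals `-i·u·a_i`. -/
theorem stmt6 {R : Type*} [CommRing R] (i : ℕ) (hi : 1 ≤ i) (u : R) (f : PowerSeries R)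
    (hf0 : PowerSeries.constantCoeff f = 1)
    (hf : ∀ k, 1 ≤ k → k ≤ i - 1 → PowerSeries.coeff k f = 0) :
    IsUnit (1 + PowerSeries.C u * PowerSeries.X) ∧ IsUnit f ∧
    ∀ w : PowerSeries R, (1 + PowerSeries.C u * PowerSeries.X) * w = 1 →
      PowerSeries.constantCoeff (PowerSeries.X * w) = 0 ∧
      ∀ h : PowerSeries R, f * h = 1 →
        (∀ k, 1 ≤ k → k ≤ i →
          PowerSeries.coeff k (PowerSeries.substAt (PowerSeries.X * w) f * h) = 0) ∧
        PowerSeries.coeff (i + 1) (PowerSeries.substAt (PowerSeries.X * w) f * h) =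
          -(i : R) * u * PowerSeries.coeff i f :=
  stmt6_general i u f hf0 hf
end
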